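/- Fix k > 0 and let X = d₁·I₃ ∈ Sym⁺(3) for some d₁ > 0 (all three eigenvalues of X equal to d₁, so D = d₁·I₃). Then for any version (V,Λ) of Y ∈ Sym⁺(3), one has d_SR(X,Y) = d((V, d₁·I₃), (V,Λ)) = d_𝒟(d₁·I₃, Λ), regardless of whether the eigenvalues of Y are distinct or not. -/

import Mathlib

open Matrix

/-- `p × p` real matrices. -/
abbrev Mat (p : ℕ) := Matrix (Fin p) (Fin p) ℝ

/-- `U ∈ SO(p)`: a rotation matrix. -/
def IsSO {p : ℕ} (U : Mat p) : Prop := U * Uᵀ = 1 ∧ U.det = 1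

/-- `D ∈ Diag⁺(p)`: diagonal with positive diagonal entries. -/
def IsDiagPos {p : ℕ} (D : Mat p) : Prop := D.IsDiag ∧ ∀ i, 0 < D i i

/-- Antisymmetric matrix. -/
def IsAntisym {p : ℕ} (A : Mat p) : Prop := Aᵀ = -A

/-- The permutation matrix `P⁰_π`: in column `j`, the entry `π j` equals 1. -/
def P0 {p : ℕ} (π : Equiv.Perm (Fin p)) : Mat p :=
  Matrix.of fun i j => if i = π j then (1 : ℝ) else 0

/-- `diag(−1,1,…,1)`. -/
def flipMat (p : ℕ) : Mat p :=
  Matrix.diagonal fun i => if (i : ℕ) = 0 then (-1 : ℝ) else 1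

open scoped Classical in
/-- `P_π`: the determinant-one modification of `P⁰_π`. -/
noncomputable def Pmat {p : ℕ} (π : Equiv.Perm (Fin p)) : Mat p :=
  if (P0 π).det = 1 then P0 π else flipMat p * P0 π

/-- `D_π := P_π D P_πᵀ`. -/
noncomputable def permDiag {p : ℕ} (π : Equiv.Perm (Fin p)) (D : Mat p) : Mat p :=
  Pmat π * D * (Pmat π)ᵀ

/-- The stabilizer group `G_D = {R ∈ SO(p) : R D Rᵀ = D}`. -/
def GD {p : ℕ} (D : Mat p) : Set (Mat p) := {R | IsSO R ∧ R * D * Rᵀ = D}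

/-- Squared Frobenius norm. -/
noncomputable def frobSq {p : ℕ} (A : Mat p) : ℝ := ∑ i, ∑ j, (A i j) ^ 2

/-- `d_SO(U,V)²`: the minimal value of `‖A‖_F²/2` over antisymmetric `A` with `exp A = V Uᵀ`. -/
noncomputable def dSOsq {p : ℕ} (U V : Mat p) : ℝ :=
  sInf {x | ∃ A : Mat p, IsAntisym A ∧ NormedSpace.exp A = V * Uᵀ ∧ x = frobSq A / 2}

/-- `d_𝒟(D,Λ)²`. -/
noncomputable def dDsq {p : ℕ} (D Λ : Mat p) : ℝ :=
  ∑ i, (Real.log (Λ i i) - Real.log (D i i)) ^ 2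

/-- The geodesic distance on `SO(p) × Diag⁺(p)` (with weight `k`). -/
noncomputable def gdist {p : ℕ} (k : ℝ) (a b : Mat p × Mat p) : ℝ :=
  Real.sqrt (k * dSOsq a.1 b.1 + dDsq a.2 b.2)

/-- `𝓔_X`: the set of versions (eigen-decompositions) of `X`. -/
def Versions {p : ℕ} (X : Mat p) : Set (Mat p × Mat p) :=
  {a | IsSO a.1 ∧ IsDiagPos a.2 ∧ a.1 * a.2 * a.1ᵀ = X}

/-- The scaling–rotation distance on `Sym⁺(p)`. -/
noncomputable def dSR {p : ℕ} (k : ℝ) (X Y : Mat p) : ℝ :=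
  sInf {x | ∃ a ∈ Versions X, ∃ b ∈ Versions Y, x = gdist k a b}

/-!
Every version of `c • 1` has diagonal part `c • 1`, and the diagonal parts of any two versions
of `Y` are the same multiset, namely the roots of the characteristic polynomial of `Y`. So the
`d_𝒟` term does not depend on the versions chosen, while the rotational term `k · d_SO²` is
nonnegative and vanishes when both rotations are taken equal to `V`.
-/

namespace Matrix

variable {n R : Type*} [Fintype n] [DecidableEq n]

open Polynomial in
theorem roots_charpoly_diagonal [CommRing R] [IsDomain R] (d : n → R) :
    (diagonal d).charpoly.roots = Finset.univ.val.map d := by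
  simpa [charpoly_diagonal, Multiset.map_map, Function.comp_def] using
    roots_multiset_prod_X_sub_C (Finset.univ.val.map d)

theorem charpoly_conj_of_transpose_mul_self [CommRing R] {W : Matrix n n R} (M : Matrix n n R)
    (hW : Wᵀ * W = 1) : (W * M * Wᵀ).charpoly = M.charpoly := by
  rw [charpoly_mul_comm, ← Matrix.mul_assoc, hW, Matrix.one_mul]

end Matrix

variable {p : ℕ}

theorem IsSO.transpose_mul_self {U : Mat p} (hU : IsSO U) : Uᵀ * U = 1 :=
  mul_eq_one_comm.mp hU.1

theorem diag_multiset_eq_of_mem_versions {Y : Mat p} {a b : Mat p × Mat p}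
    (ha : a ∈ Versions Y) (hb : b ∈ Versions Y) :
    Finset.univ.val.map a.2.diag = Finset.univ.val.map b.2.diag := by
  obtain ⟨hU, ⟨hD, -⟩, hUD⟩ := ha
  obtain ⟨hV, ⟨hΛ, -⟩, hVΛ⟩ := hb
  have hchar : a.2.charpoly = b.2.charpoly := by
    rw [← charpoly_conj_of_transpose_mul_self a.2 hU.transpose_mul_self, hUD,
      ← hVΛ, charpoly_conj_of_transpose_mul_self b.2 hV.transpose_mul_self]
  rw [← roots_charpoly_diagonal, ← roots_charpoly_diagonal, hD.diagonal_diag, hΛ.diagonal_diag,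
    hchar]

theorem dDsq_smul_one_left (c : ℝ) (D : Mat p) :
    dDsq (c • 1) D =
      ((Finset.univ.val.map D.diag).map fun x => (Real.log x - Real.log c) ^ 2).sum := by
  simp [dDsq, Finset.sum_eq_multiset_sum, Function.comp_def]

theorem dDsq_smul_one_eq_of_mem_versions {Y : Mat p} {a b : Mat p × Mat p}
    (ha : a ∈ Versions Y) (hb : b ∈ Versions Y) (c : ℝ) :
    dDsq (c • 1) a.2 = dDsq (c • 1) b.2 := by
  rw [dDsq_smul_one_left, dDsq_smul_one_left, diag_multiset_eq_of_mem_versions ha hb]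

theorem eq_smul_one_of_mem_versions_smul_one {c : ℝ} {a : Mat p × Mat p}
    (ha : a ∈ Versions (c • (1 : Mat p))) : a.2 = c • 1 := by
  obtain ⟨hU, -, hUD⟩ := ha
  calc a.2 = a.1ᵀ * (a.1 * a.2 * a.1ᵀ) * a.1 := by
        simp only [← Matrix.mul_assoc, hU.transpose_mul_self, Matrix.one_mul]
        rw [Matrix.mul_assoc, hU.transpose_mul_self, Matrix.mul_one]
    _ = c • 1 := by
        rw [hUD, Matrix.mul_smul, Matrix.mul_one, Matrix.smul_mul, hU.transpose_mul_self]

theorem mk_smul_one_mem_versions_smul_one {U : Mat p} (hU : IsSO U) {c : ℝ} (hc : 0 < c) :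
    (U, c • (1 : Mat p)) ∈ Versions (c • (1 : Mat p)) := by
  refine ⟨hU, ⟨isDiag_one.smul c, fun i => by simpa using hc⟩, ?_⟩
  rw [Matrix.mul_smul, Matrix.mul_one, Matrix.smul_mul, hU.1]

theorem frobSq_nonneg (A : Mat p) : 0 ≤ frobSq A := by
  unfold frobSq; positivity

theorem dSOsq_nonneg (U V : Mat p) : 0 ≤ dSOsq U V :=
  Real.sInf_nonneg <| by
    rintro _ ⟨A, -, -, rfl⟩
    exact div_nonneg (frobSq_nonneg A) zero_le_two

theorem dSOsq_self {U : Mat p} (hU : U * Uᵀ = 1) : dSOsq U U = 0 := by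
  refine le_antisymm (csInf_le ⟨0, ?_⟩ ⟨0, ?_, ?_, ?_⟩) (dSOsq_nonneg U U)
  · rintro _ ⟨A, -, -, rfl⟩
    exact div_nonneg (frobSq_nonneg A) zero_le_two
  · simp [IsAntisym]
  · rw [NormedSpace.exp_zero, hU]
  · simp [frobSq]

theorem gdist_same_rotation {U : Mat p} (hU : U * Uᵀ = 1) (k : ℝ) (D Λ : Mat p) :
    gdist k (U, D) (U, Λ) = Real.sqrt (dDsq D Λ) := by
  simp [gdist, dSOsq_self hU]

theorem sqrt_dDsq_le_gdist {k : ℝ} (hk : 0 ≤ k) (a b : Mat p × Mat p) :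
    Real.sqrt (dDsq a.2 b.2) ≤ gdist k a b :=
  Real.sqrt_le_sqrt <| le_add_of_nonneg_left <| mul_nonneg hk (dSOsq_nonneg a.1 b.1)

theorem dSR_smul_one {k : ℝ} (hk : 0 ≤ k) {c : ℝ} (hc : 0 < c) {Y : Mat p}
    {b : Mat p × Mat p} (hb : b ∈ Versions Y) :
    dSR k (c • 1) Y = Real.sqrt (dDsq (c • 1) b.2) := by
  refine IsLeast.csInf_eq ⟨⟨(b.1, c • 1), mk_smul_one_mem_versions_smul_one hb.1 hc, b, hb,
    (gdist_same_rotation hb.1.1 k _ _).symm⟩, ?_⟩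
  rintro _ ⟨a, ha, b', hb', rfl⟩
  calc Real.sqrt (dDsq (c • 1) b.2) = Real.sqrt (dDsq a.2 b'.2) := by
        rw [eq_smul_one_of_mem_versions_smul_one ha, dDsq_smul_one_eq_of_mem_versions hb hb']
    _ ≤ gdist k a b' := sqrt_dDsq_le_gdist hk a b'

theorem dSR_three_by_three_isotropic_general {k : ℝ} (hk : 0 < k)
    (d₁ : ℝ) (hd₁ : 0 < d₁) (Y : Mat 3)
    (V Λ : Mat 3) (hVL : (V, Λ) ∈ Versions Y) :
    dSR k (d₁ • (1 : Mat 3)) Y = gdist k (V, d₁ • (1 : Mat 3)) (V, Λ) ∧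
    gdist k (V, d₁ • (1 : Mat 3)) (V, Λ) = Real.sqrt (dDsq (d₁ • (1 : Mat 3)) Λ) := by
  have hgdist := gdist_same_rotation hVL.1.1 k (d₁ • (1 : Mat 3)) Λ
  exact ⟨hgdist ▸ dSR_smul_one hk.le hd₁ hVL, hgdist⟩

/-- scaling–rotation distance from an isotropic `3 × 3` SPD matrix. -/
theorem dSR_three_by_three_isotropic {k : ℝ} (hk : 0 < k)
    (d₁ : ℝ) (hd₁ : 0 < d₁) (Y : Mat 3) (hY : Y.PosDef)
    (V Λ : Mat 3) (hVL : (V, Λ) ∈ Versions Y) :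
    dSR k (d₁ • (1 : Mat 3)) Y = gdist k (V, d₁ • (1 : Mat 3)) (V, Λ) ∧
    gdist k (V, d₁ • (1 : Mat 3)) (V, Λ) = Real.sqrt (dDsq (d₁ • (1 : Mat 3)) Λ) :=
  dSR_three_by_three_isotropic_general hk d₁ hd₁ Y V Λ hVL
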